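/- arXiv:0708.0983 — 5 statements merged into one kernel-verified Lean document; each statement's English description precedes it below -/
import Mathlib

section
/- Kernel change-of-variables asymptotic (constant A₁): as h → 0⁺, h^{-d} ∫_{B̄(0,r)} K((φ(z) − x)/h) f(z) dz converges to f(0) · ∫_{ℝ^d} K(L u) du. -/
open MeasureTheory Metric Filter Topology Module Set

/-!
Substituting `z = h • u` turns `h^(-d) ∫_{B̄(0,r)} K((φ z − φ 0)/h) f z dz` into
`∫ 1_{B̄(0,r)}(h • u) K((φ (h • u) − φ 0)/h) f (h • u) du`. As `h → 0⁺` the integrand tends to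
`K (L u) f 0` pointwise, by differentiability of `φ` at `0` and continuity of `f` at `0`. The lower
bi-Lipschitz bound `c ‖z‖ ≤ ‖φ z − φ 0‖` confines the support of the integrand to the fixed ball
`B̄(0, R / c)`, where `B̄(0, R)` contains the support of `K`, so dominated convergence applies.
-/

section Rescaling

variable {E F : Type*} [NormedAddCommGroup E] [NormedSpace ℝ E]
  [NormedAddCommGroup F] [NormedSpace ℝ F]

theorem HasFDerivAt.tendsto_inv_smul_sub {φ : E → F} {L : E →L[ℝ] F} {x : E}
    (hφ : HasFDerivAt φ L x) (u : E) :
    Tendsto (fun h : ℝ => h⁻¹ • (φ (x + h • u) - φ x)) (𝓝[>] 0) (𝓝 (L u)) := by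
  have hinv : Tendsto (fun h : ℝ => ‖h⁻¹‖) (𝓝[>] 0) atTop :=
    tendsto_norm_atTop_atTop.comp tendsto_inv_nhdsGT_zero
  simpa using hφ.lim u hinv

theorem norm_le_div_of_inv_smul_sub_mem_closedBall {φ : E → F} {r c R h : ℝ} {u : E}
    (hc : 0 < c) (hlow : ∀ z ∈ closedBall (0 : E) r, c * ‖z‖ ≤ ‖φ z - φ 0‖) (hh : 0 < h)
    (hu : h • u ∈ closedBall (0 : E) r) (hR : h⁻¹ • (φ (h • u) - φ 0) ∈ closedBall (0 : F) R) :
    ‖u‖ ≤ R / c := by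
  rw [mem_closedBall_zero_iff, norm_smul, norm_inv, Real.norm_of_nonneg hh.le,
    inv_mul_le_iff₀ hh] at hR
  have hφu := hlow _ hu
  rw [norm_smul, Real.norm_of_nonneg hh.le] at hφu
  have : h * (c * ‖u‖) ≤ h * R := by linarith
  rw [le_div_iff₀ hc, mul_comm]
  exact le_of_mul_le_mul_left this hh

theorem norm_indicator_kernel_rescaled_le {φ : E → F} {K : F → ℝ} {f : E → ℝ}
    {r c R κ M h : ℝ} (hc : 0 < c)
    (hlow : ∀ z ∈ closedBall (0 : E) r, c * ‖z‖ ≤ ‖φ z - φ 0‖)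
    (hκ : ∀ v, ‖K v‖ ≤ κ) (hR : tsupport K ⊆ closedBall 0 R) (hM : ∀ z, ‖f z‖ ≤ M)
    (hh : 0 < h) (u : E) :
    ‖(closedBall 0 r).indicator (fun z => K (h⁻¹ • (φ z - φ 0)) * f z) (h • u)‖ ≤
      (closedBall (0 : E) (R / c)).indicator (fun _ => κ * M) u := by
  have hκ0 : 0 ≤ κ := (norm_nonneg _).trans (hκ 0)
  have hκM : 0 ≤ κ * M := mul_nonneg hκ0 ((norm_nonneg _).trans (hM 0))
  have hbound_nonneg := indicator_nonneg (s := closedBall (0 : E) (R / c)) (fun _ _ => hκM) u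
  by_cases hu : h • u ∈ closedBall 0 r
  · rw [indicator_of_mem hu]
    by_cases hK : h⁻¹ • (φ (h • u) - φ 0) ∈ tsupport K
    · have hu' := norm_le_div_of_inv_smul_sub_mem_closedBall hc hlow hh hu (hR hK)
      rw [indicator_of_mem (mem_closedBall_zero_iff.2 hu'), norm_mul]
      exact mul_le_mul (hκ _) (hM _) (norm_nonneg _) hκ0
    · rwa [image_eq_zero_of_notMem_tsupport hK, zero_mul, norm_zero]
  · rwa [indicator_of_notMem hu, norm_zero]

theorem tendsto_indicator_kernel_rescaled {φ : E → F} {L : E →L[ℝ] F} {K : F → ℝ}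
    {f : E → ℝ} {r : ℝ} (hr : 0 < r) (hφ : HasFDerivAt φ L 0) (hK : Continuous K)
    (hf : ContinuousAt f 0) (u : E) :
    Tendsto (fun h : ℝ =>
        (closedBall 0 r).indicator (fun z => K (h⁻¹ • (φ z - φ 0)) * f z) (h • u))
      (𝓝[>] 0) (𝓝 (K (L u) * f 0)) := by
  have hsmul : Tendsto (fun h : ℝ => h • u) (𝓝 0) (𝓝 0) := by
    simpa using (tendsto_id : Tendsto (id : ℝ → ℝ) (𝓝 0) (𝓝 0)).smul_const u
  have hball : ∀ᶠ h : ℝ in 𝓝[>] 0, h • u ∈ closedBall (0 : E) r :=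
    nhdsWithin_le_nhds (hsmul (closedBall_mem_nhds 0 hr))
  have hdiff : Tendsto (fun h : ℝ => h⁻¹ • (φ (h • u) - φ 0)) (𝓝[>] 0) (𝓝 (L u)) := by
    simpa using hφ.tendsto_inv_smul_sub u
  refine (((hK.tendsto _).comp hdiff).mul
    (hf.tendsto.comp (hsmul.mono_left nhdsWithin_le_nhds))).congr' ?_
  filter_upwards [hball] with h hh
  rw [indicator_of_mem hh]
  rfl

variable [FiniteDimensional ℝ E] [MeasurableSpace E] [BorelSpace E]
  (μ : Measure E) [μ.IsAddHaarMeasure]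

theorem setIntegral_div_pow_finrank_eq_integral_indicator_smul (g : E → ℝ) {s : Set E}
    (hs : MeasurableSet s) {h : ℝ} (hh : 0 < h) :
    (∫ z in s, g z ∂μ) / h ^ finrank ℝ E = ∫ u, s.indicator g (h • u) ∂μ := by
  rw [Measure.integral_comp_smul_of_nonneg μ _ h (hR := hh.le), integral_indicator hs,
    smul_eq_mul, inv_mul_eq_div]

theorem tendsto_integral_indicator_kernel_rescaled [MeasurableSpace F] [BorelSpace F]
    {φ : E → F} {L : E →L[ℝ] F} {K : F → ℝ} {f : E → ℝ} {r c M : ℝ} (hr : 0 < r)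
    (hφm : Measurable φ) (hφ : HasFDerivAt φ L 0) (hc : 0 < c)
    (hlow : ∀ z ∈ closedBall (0 : E) r, c * ‖z‖ ≤ ‖φ z - φ 0‖)
    (hfm : Measurable f) (hM : ∀ z, ‖f z‖ ≤ M) (hf : ContinuousAt f 0)
    (hK : Continuous K) (hKs : HasCompactSupport K) :
    Tendsto (fun h : ℝ =>
        ∫ u, (closedBall 0 r).indicator (fun z => K (h⁻¹ • (φ z - φ 0)) * f z) (h • u) ∂μ)
      (𝓝[>] 0) (𝓝 (f 0 * ∫ u, K (L u) ∂μ)) := by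
  obtain ⟨κ, hκ⟩ := hKs.exists_bound_of_continuous hK
  obtain ⟨R, hR⟩ := hKs.isBounded.subset_closedBall 0
  rw [mul_comm, ← integral_mul_const]
  refine tendsto_integral_filter_of_dominated_convergence
    ((closedBall (0 : E) (R / c)).indicator fun _ => κ * M) ?_ ?_ ?_
    (Eventually.of_forall (tendsto_indicator_kernel_rescaled hr hφ hK hf))
  · refine Eventually.of_forall fun h => Measurable.aestronglyMeasurable ?_
    exact ((hK.measurable.comp ((hφm.sub_const _).const_smul _)).mul hfm).indicator
      measurableSet_closedBall |>.comp (measurable_const_smul h)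
  · filter_upwards [self_mem_nhdsWithin] with h hh
    exact Eventually.of_forall (norm_indicator_kernel_rescaled_le hc hlow hκ hR hM hh)
  · exact (integrable_indicator_iff measurableSet_closedBall).2
      (integrableOn_const measure_closedBall_lt_top.ne)

end Rescaling

theorem kernel_change_of_variables_A1_general
    (d D : ℕ) (r : ℝ) (hr : 0 < r)
    (φ : EuclideanSpace ℝ (Fin d) → EuclideanSpace ℝ (Fin D))
    (hφ : ContDiff ℝ 1 φ)
    (c C : ℝ) (hc : 0 < c)
    (hbil : ∀ z ∈ closedBall (0 : EuclideanSpace ℝ (Fin d)) r,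
      ∀ z' ∈ closedBall (0 : EuclideanSpace ℝ (Fin d)) r,
        c * ‖z - z'‖ ≤ ‖φ z - φ z'‖ ∧ ‖φ z - φ z'‖ ≤ C * ‖z - z'‖)
    (f : EuclideanSpace ℝ (Fin d) → ℝ)
    (hf_meas : Measurable f)
    (hf_nonneg : ∀ z, 0 ≤ f z)
    (hf_bdd : ∃ M : ℝ, ∀ z, f z ≤ M)
    (hf_cont : ContinuousAt f 0)
    (K : EuclideanSpace ℝ (Fin D) → ℝ)
    (hK_cont : Continuous K)
    (hK_supp : HasCompactSupport K) :
    Tendsto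
      (fun h : ℝ =>
        (∫ z in closedBall (0 : EuclideanSpace ℝ (Fin d)) r,
            K (h⁻¹ • (φ z - φ 0)) * f z) / h ^ d)
      (nhdsWithin 0 (Set.Ioi 0))
      (nhds (f 0 * ∫ u, K (fderiv ℝ φ 0 u))) := by
  obtain ⟨M, hM⟩ := hf_bdd
  have hφ0 : HasFDerivAt φ (fderiv ℝ φ 0) 0 := (hφ.differentiable one_ne_zero 0).hasFDerivAt
  have hlow : ∀ z ∈ closedBall 0 r, c * ‖z‖ ≤ ‖φ z - φ 0‖ := fun z hz => by
    simpa using (hbil z hz 0 (mem_closedBall_self hr.le)).1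
  have hfM : ∀ z, ‖f z‖ ≤ M := fun z => (Real.norm_of_nonneg (hf_nonneg z)).trans_le (hM z)
  let μ : Measure (EuclideanSpace ℝ (Fin d)) := volume
  refine (tendsto_integral_indicator_kernel_rescaled μ hr hφ.continuous.measurable hφ0 hc hlow
    hf_meas hfM hf_cont hK_cont hK_supp).congr' ?_
  filter_upwards [self_mem_nhdsWithin] with h hh
  simpa only [finrank_euclideanSpace_fin] using
    (setIntegral_div_pow_finrank_eq_integral_indicator_smul μ _ measurableSet_closedBall hh).symm

/-- Kernel change-of-variables asymptotic (constant A₁): as `h → 0⁺`,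
`h^(-d) ∫_{B̄(0,r)} K((φ z − x)/h) f z dz → f 0 · ∫_{ℝ^d} K (L u) du`. -/
theorem kernel_change_of_variables_A1
    (d D : ℕ) (hd : 0 < d) (hdD : d ≤ D) (r : ℝ) (hr : 0 < r)
    (φ : EuclideanSpace ℝ (Fin d) → EuclideanSpace ℝ (Fin D))
    (hφ : ContDiff ℝ 1 φ)
    (c C : ℝ) (hc : 0 < c) (hcC : c ≤ C)
    (hbil : ∀ z ∈ closedBall (0 : EuclideanSpace ℝ (Fin d)) r,
      ∀ z' ∈ closedBall (0 : EuclideanSpace ℝ (Fin d)) r,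
        c * ‖z - z'‖ ≤ ‖φ z - φ z'‖ ∧ ‖φ z - φ z'‖ ≤ C * ‖z - z'‖)
    (hL : Function.Injective (fderiv ℝ φ 0))
    (f : EuclideanSpace ℝ (Fin d) → ℝ)
    (hf_meas : Measurable f)
    (hf_nonneg : ∀ z, 0 ≤ f z)
    (hf_supp : ∀ z ∉ closedBall (0 : EuclideanSpace ℝ (Fin d)) r, f z = 0)
    (hf_bdd : ∃ M : ℝ, ∀ z, f z ≤ M)
    (hf_prob : ∫ z, f z = 1)
    (hf_cont : ContinuousAt f 0) (hf_pos : 0 < f 0)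
    (K : EuclideanSpace ℝ (Fin D) → ℝ)
    (hK_nonneg : ∀ u, 0 ≤ K u) (hK_cont : Continuous K)
    (hK_supp : HasCompactSupport K) :
    Tendsto
      (fun h : ℝ =>
        (∫ z in closedBall (0 : EuclideanSpace ℝ (Fin d)) r,
            K (h⁻¹ • (φ z - φ 0)) * f z) / h ^ d)
      (nhdsWithin 0 (Set.Ioi 0))
      (nhds (f 0 * ∫ u, K (fderiv ℝ φ 0 u))) :=
  kernel_change_of_variables_A1_general d D r hr φ hφ c C hc hbil f hf_meas hf_nonneg hf_bdd hf_cont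
    K hK_cont hK_supp
end

section
/- Second kernel moment asymptotic (constant A₃): as h → 0⁺, the D×D-matrix-valued integral h^{-(d+2)} ∫_{B̄(0,r)} K((φ(z) − x)/h) (φ(z) − x)(φ(z) − x)^T f(z) dz converges entrywise to f(0) · ∫_{ℝ^d} K(L u) (L u)(L u)^T du. -/
/-!
Substituting `z = h • u` turns the normalised integral into
`∫ Ψ (h⁻¹ • (φ (h • u) - φ 0)) f (h • u) du` with `Ψ v = K v * (v a * v b)`: the Jacobian
`h ^ d` and the quadratic moment `h ^ 2` absorb the factor `h ^ (d + 2)`. The difference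
quotient tends to `L u`, and the lower bi-Lipschitz bound confines the integrand to the fixed
ball `‖u‖ ≤ R / c` (with `supp K ⊆ B̄(0, R)`), so dominated convergence gives the limit.
-/

open MeasureTheory Metric Filter Topology Module

theorem HasFDerivAt.tendsto_inv_smul_sub_nhdsGT {E F : Type*} [NormedAddCommGroup E]
    [NormedSpace ℝ E] [NormedAddCommGroup F] [NormedSpace ℝ F] {φ : E → F} {L : E →L[ℝ] F}
    {x : E} (hφ : HasFDerivAt φ L x) (v : E) :
    Tendsto (fun t : ℝ => t⁻¹ • (φ (x + t • v) - φ x)) (𝓝[>] 0) (𝓝 (L v)) := by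
  simpa [Function.comp_def] using (hφ.lim_real v).comp tendsto_inv_nhdsGT_zero

section Rescaling

variable {E : Type*} [NormedAddCommGroup E] [NormedSpace ℝ E] [FiniteDimensional ℝ E]
  [MeasurableSpace E] [BorelSpace E] (μ : Measure E) [μ.IsAddHaarMeasure]

theorem integral_eq_pow_finrank_mul_integral_comp_smul (g : E → ℝ) {h : ℝ} (hh : 0 < h) :
    ∫ z, g z ∂μ = h ^ finrank ℝ E * ∫ u, g (h • u) ∂μ := by
  rw [Measure.integral_comp_smul_of_nonneg μ g h (hR := hh.le), smul_eq_mul,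
    mul_inv_cancel_left₀ (by positivity)]

theorem tendsto_integral_comp_inv_smul_sub_mul {F : Type*} [NormedAddCommGroup F]
    [NormedSpace ℝ F] {Ψ : F → ℝ} (hΨ : Continuous Ψ) (hΨ_supp : HasCompactSupport Ψ)
    {φ : E → F} {L : E →L[ℝ] F} (hφ : Continuous φ) (hφL : HasFDerivAt φ L 0)
    {f : E → ℝ} (hf_meas : Measurable f) {M : ℝ} (hf_bdd : ∀ z, ‖f z‖ ≤ M)
    (hf_cont : ContinuousAt f 0) {c : ℝ} (hc : 0 < c)
    (hφ_low : ∀ z, f z ≠ 0 → c * ‖z‖ ≤ ‖φ z - φ 0‖) :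
    Tendsto (fun h : ℝ => ∫ u, Ψ (h⁻¹ • (φ (h • u) - φ 0)) * f (h • u) ∂μ) (𝓝[>] 0)
      (𝓝 (f 0 * ∫ u, Ψ (L u) ∂μ)) := by
  obtain ⟨R, hR⟩ := hΨ_supp.isCompact.isBounded.subset_closedBall 0
  obtain ⟨B, hB⟩ := hΨ.bounded_above_of_compact_support hΨ_supp
  have hsupp : ∀ h : ℝ, 0 < h → ∀ u,
      Ψ (h⁻¹ • (φ (h • u) - φ 0)) * f (h • u) ≠ 0 → u ∈ closedBall (0 : E) (R / c) := by
    intro h hh u hne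
    have hΨR : ‖h⁻¹ • (φ (h • u) - φ 0)‖ ≤ R := by
      simpa using hR (subset_tsupport _ (left_ne_zero_of_mul hne))
    have hlow := hφ_low _ (right_ne_zero_of_mul hne)
    rw [norm_smul, Real.norm_of_nonneg hh.le] at hlow
    rw [norm_smul, Real.norm_of_nonneg (inv_nonneg.2 hh.le)] at hΨR
    rw [mem_closedBall_zero_iff, le_div_iff₀ hc]
    calc ‖u‖ * c = h⁻¹ * (c * (h * ‖u‖)) := by field_simp
      _ ≤ h⁻¹ * ‖φ (h • u) - φ 0‖ := by gcongr
      _ ≤ R := hΨR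
  rw [mul_comm, ← integral_mul_const]
  refine tendsto_integral_filter_of_dominated_convergence
    ((closedBall (0 : E) (R / c)).indicator fun _ => B * M) ?_ ?_ ?_ ?_
  · refine Eventually.of_forall fun h => (Measurable.aestronglyMeasurable ?_)
    exact (hΨ.comp (by fun_prop)).measurable.mul (hf_meas.comp (measurable_const_smul h))
  · filter_upwards [self_mem_nhdsWithin] with h hh
    refine Eventually.of_forall fun u => ?_
    by_cases hu : u ∈ closedBall (0 : E) (R / c)
    · rw [Set.indicator_of_mem hu, norm_mul]
      exact mul_le_mul (hB _) (hf_bdd _) (norm_nonneg _) ((norm_nonneg _).trans (hB 0))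
    · rw [Set.indicator_of_notMem hu, not_imp_comm.1 (hsupp h hh u) hu, norm_zero]
  · exact (integrable_indicator_iff measurableSet_closedBall).2
      (integrableOn_const measure_closedBall_lt_top.ne)
  · refine Eventually.of_forall fun u => ((hΨ.tendsto _).comp ?_).mul (hf_cont.tendsto.comp ?_)
    · simpa using hφL.tendsto_inv_smul_sub_nhdsGT u
    · exact ((continuous_id.smul continuous_const).tendsto' (0 : ℝ) (0 : E)
        (zero_smul ℝ u)).mono_left nhdsWithin_le_nhds

end Rescaling

theorem kernel_second_moment_A3_general
    (d D : ℕ) (r : ℝ)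
    (φ : EuclideanSpace ℝ (Fin d) → EuclideanSpace ℝ (Fin D))
    (hφ : ContDiff ℝ 1 φ)
    (c C : ℝ) (hc : 0 < c)
    (hbil : ∀ z ∈ closedBall (0 : EuclideanSpace ℝ (Fin d)) r,
      ∀ z' ∈ closedBall (0 : EuclideanSpace ℝ (Fin d)) r,
        c * ‖z - z'‖ ≤ ‖φ z - φ z'‖ ∧ ‖φ z - φ z'‖ ≤ C * ‖z - z'‖)
    (f : EuclideanSpace ℝ (Fin d) → ℝ)
    (hf_meas : Measurable f)
    (hf_nonneg : ∀ z, 0 ≤ f z)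
    (hf_supp : ∀ z ∉ closedBall (0 : EuclideanSpace ℝ (Fin d)) r, f z = 0)
    (hf_bdd : ∃ M : ℝ, ∀ z, f z ≤ M)
    (hf_cont : ContinuousAt f 0)
    (K : EuclideanSpace ℝ (Fin D) → ℝ)
    (hK_cont : Continuous K)
    (hK_supp : HasCompactSupport K) :
    ∀ a b : Fin D,
      Tendsto
        (fun h : ℝ =>
          (∫ z in closedBall (0 : EuclideanSpace ℝ (Fin d)) r,
              K (h⁻¹ • (φ z - φ 0)) * ((φ z - φ 0) a * (φ z - φ 0) b) * f z) /
            h ^ (d + 2))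
        (nhdsWithin 0 (Set.Ioi 0))
        (nhds (f 0 *
          ∫ u, K (fderiv ℝ φ 0 u) *
            (fderiv ℝ φ 0 u a * fderiv ℝ φ 0 u b))) := by
  intro a b
  obtain ⟨M, hM⟩ := hf_bdd
  set Ψ : EuclideanSpace ℝ (Fin D) → ℝ := fun v => K v * (v a * v b)
  have hφ_low (z) (hz : f z ≠ 0) : c * ‖z‖ ≤ ‖φ z - φ 0‖ := by
    have hzr : z ∈ closedBall 0 r := not_imp_comm.1 (hf_supp z) hz
    simpa using (hbil z hzr 0 (mem_closedBall_self (dist_nonneg.trans hzr))).1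
  have hmoment (h : ℝ) (hh : h ≠ 0) (w : EuclideanSpace ℝ (Fin D)) :
      K (h⁻¹ • w) * (w a * w b) = h ^ 2 * Ψ (h⁻¹ • w) := by
    simp only [Ψ, PiLp.smul_apply, smul_eq_mul]
    field_simp
  have hΨ : Continuous Ψ := hK_cont.mul (by fun_prop)
  refine (tendsto_integral_comp_inv_smul_sub_mul volume hΨ
    hK_supp.mul_right hφ.continuous (hφ.differentiable one_ne_zero 0).hasFDerivAt hf_meas
    (fun z => (Real.norm_of_nonneg (hf_nonneg z)).trans_le (hM z)) hf_cont hc hφ_low).congr'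
    (eventually_mem_nhdsWithin.mono fun h (hh : 0 < h) => ?_)
  dsimp only
  rw [eq_div_iff (by positivity),
    setIntegral_eq_integral_of_forall_compl_eq_zero fun z hz => by simp [hf_supp z hz]]
  simp only [hmoment h hh.ne', mul_assoc, integral_const_mul]
  rw [integral_eq_pow_finrank_mul_integral_comp_smul volume
    (fun z => Ψ (h⁻¹ • (φ z - φ 0)) * f z) hh, finrank_euclideanSpace_fin]
  ring

/-- Second kernel moment asymptotic (constant A₃): as `h → 0⁺`, entrywise,
`h^(-(d+2)) ∫_{B̄(0,r)} K((φ z − x)/h) (φ z − x)(φ z − x)ᵀ f z dz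
  → f 0 · ∫_{ℝ^d} K (L u) (L u)(L u)ᵀ du`. -/
theorem kernel_second_moment_A3
    (d D : ℕ) (hd : 0 < d) (hdD : d ≤ D) (r : ℝ) (hr : 0 < r)
    (φ : EuclideanSpace ℝ (Fin d) → EuclideanSpace ℝ (Fin D))
    (hφ : ContDiff ℝ 1 φ)
    (c C : ℝ) (hc : 0 < c) (hcC : c ≤ C)
    (hbil : ∀ z ∈ closedBall (0 : EuclideanSpace ℝ (Fin d)) r,
      ∀ z' ∈ closedBall (0 : EuclideanSpace ℝ (Fin d)) r,
        c * ‖z - z'‖ ≤ ‖φ z - φ z'‖ ∧ ‖φ z - φ z'‖ ≤ C * ‖z - z'‖)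
    (hL : Function.Injective (fderiv ℝ φ 0))
    (f : EuclideanSpace ℝ (Fin d) → ℝ)
    (hf_meas : Measurable f)
    (hf_nonneg : ∀ z, 0 ≤ f z)
    (hf_supp : ∀ z ∉ closedBall (0 : EuclideanSpace ℝ (Fin d)) r, f z = 0)
    (hf_bdd : ∃ M : ℝ, ∀ z, f z ≤ M)
    (hf_prob : ∫ z, f z = 1)
    (hf_cont : ContinuousAt f 0) (hf_pos : 0 < f 0)
    (K : EuclideanSpace ℝ (Fin D) → ℝ)
    (hK_nonneg : ∀ u, 0 ≤ K u) (hK_cont : Continuous K)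
    (hK_supp : HasCompactSupport K) :
    ∀ a b : Fin D,
      Tendsto
        (fun h : ℝ =>
          (∫ z in closedBall (0 : EuclideanSpace ℝ (Fin d)) r,
              K (h⁻¹ • (φ z - φ 0)) * ((φ z - φ 0) a * (φ z - φ 0) b) * f z) /
            h ^ (d + 2))
        (nhdsWithin 0 (Set.Ioi 0))
        (nhds (f 0 *
          ∫ u, K (fderiv ℝ φ 0 u) *
            (fderiv ℝ φ 0 u a * fderiv ℝ φ 0 u b))) :=
  kernel_second_moment_A3_general d D r φ hφ c C hc hbil f hf_meas hf_nonneg hf_supp hf_bdd hf_cont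
    K hK_cont hK_supp
end

section
/- Squared-kernel asymptotic (constant C₁): as h → 0⁺, h^{-d} ∫_{B̄(0,r)} K((φ(z) − x)/h)² v(φ(z)) f(z) dz converges to f(0) · v(x) · ∫_{ℝ^d} K(L u)² du. -/
open MeasureTheory Metric Filter Topology

/-! After the substitution `z = h • u` the normalised integral becomes
`∫ K (h⁻¹ • (φ (h • u) - φ 0)) ^ 2 * v (φ (h • u)) * f (h • u) du`. The difference quotient
`h⁻¹ • (φ (h • u) - φ 0)` tends to `L u`, and the co-Lipschitz bound `c ‖z‖ ≤ ‖φ z - φ 0‖`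
confines the integrand to the fixed ball of radius `R / c` whenever `K` is supported in the
ball of radius `R`, so dominated convergence applies. -/

section Rescaling

variable {E F : Type*} [NormedAddCommGroup E] [NormedSpace ℝ E]
  [NormedAddCommGroup F] [NormedSpace ℝ F]

theorem mul_norm_le_norm_inv_smul_sub {φ : E → F} {c r h : ℝ}
    (hφ : ∀ z ∈ closedBall (0 : E) r, c * ‖z‖ ≤ ‖φ z - φ 0‖) (hh : 0 < h) {u : E}
    (hu : h • u ∈ closedBall (0 : E) r) :
    c * ‖u‖ ≤ ‖h⁻¹ • (φ (h • u) - φ 0)‖ := by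
  have hcoer := hφ _ hu
  rw [norm_smul, Real.norm_of_nonneg hh.le, mul_left_comm] at hcoer
  rw [norm_smul, Real.norm_of_nonneg (inv_nonneg.2 hh.le), le_inv_mul_iff₀ hh]
  exact hcoer

theorem rescaled_integrand_eq_zero {φ : E → F} {G : F → ℝ} {W : E → ℝ} {c r R h : ℝ}
    (hφ : ∀ z ∈ closedBall (0 : E) r, c * ‖z‖ ≤ ‖φ z - φ 0‖)
    (hG : tsupport G ⊆ closedBall 0 R) (hW : ∀ z ∉ closedBall (0 : E) r, W z = 0)
    (hc : 0 < c) (hh : 0 < h) {u : E} (hu : R / c < ‖u‖) :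
    G (h⁻¹ • (φ (h • u) - φ 0)) * W (h • u) = 0 := by
  by_cases hz : h • u ∈ closedBall (0 : E) r
  · refine mul_eq_zero_of_left (image_eq_zero_of_notMem_tsupport fun hmem => ?_) _
    have hR := mem_closedBall_zero_iff.1 (hG hmem)
    have hcu := mul_norm_le_norm_inv_smul_sub hφ hh hz
    rw [div_lt_iff₀ hc] at hu
    linarith [mul_comm c ‖u‖]
  · rw [hW _ hz, mul_zero]

variable [FiniteDimensional ℝ E] [MeasurableSpace E] [BorelSpace E]

theorem tendsto_integral_rescaled (μ : Measure E) [IsFiniteMeasureOnCompacts μ]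
    {φ : E → F} {L : E →L[ℝ] F} (hφ : Continuous φ) (hφL : HasFDerivAt φ L 0)
    {c r : ℝ} (hc : 0 < c) (hφc : ∀ z ∈ closedBall (0 : E) r, c * ‖z‖ ≤ ‖φ z - φ 0‖)
    {G : F → ℝ} (hG : Continuous G) (hG_supp : HasCompactSupport G)
    {W : E → ℝ} (hW_meas : Measurable W) (hW_bdd : ∃ M, ∀ z, ‖W z‖ ≤ M)
    (hW_supp : ∀ z ∉ closedBall (0 : E) r, W z = 0) (hW_cont : ContinuousAt W 0) :
    Tendsto (fun h : ℝ => ∫ u, G (h⁻¹ • (φ (h • u) - φ 0)) * W (h • u) ∂μ) (𝓝[>] 0)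
      (𝓝 (W 0 * ∫ u, G (L u) ∂μ)) := by
  rw [mul_comm, ← integral_mul_const]
  obtain ⟨MG, hMG⟩ := hG.bounded_above_of_compact_support hG_supp
  obtain ⟨MW, hMW⟩ := hW_bdd
  obtain ⟨R, hR⟩ := hG_supp.isBounded.subset_closedBall 0
  refine tendsto_integral_filter_of_dominated_convergence
    ((closedBall (0 : E) (R / c)).indicator fun _ => MG * MW) ?_ ?_ ?_ ?_
  · refine .of_forall fun h =>
      (Measurable.mul ?_ (hW_meas.comp (measurable_const_smul h))).aestronglyMeasurable
    exact (by fun_prop : Continuous fun u : E => G (h⁻¹ • (φ (h • u) - φ 0))).measurable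
  · filter_upwards [self_mem_nhdsWithin] with h (hh : 0 < h)
    refine .of_forall fun u => ?_
    by_cases hu : u ∈ closedBall (0 : E) (R / c)
    · rw [Set.indicator_of_mem hu, norm_mul]
      exact mul_le_mul (hMG _) (hMW _) (norm_nonneg _) ((norm_nonneg _).trans (hMG 0))
    · rw [Set.indicator_of_notMem hu, rescaled_integrand_eq_zero hφc hR hW_supp hc hh
        (by simpa using hu), norm_zero]
  · exact (integrable_indicator_iff measurableSet_closedBall).2
      (integrableOn_const measure_closedBall_lt_top.ne)
  · refine .of_forall fun u => Tendsto.mul ?_ ?_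
    · have hslope := (hφL.hasLineDerivAt u).tendsto_slope_zero_right
      simp only [zero_add] at hslope
      exact (hG.tendsto _).comp hslope
    · refine hW_cont.tendsto.comp ?_
      simpa using (tendsto_nhdsWithin_of_tendsto_nhds (tendsto_id (x := 𝓝 (0 : ℝ)))).smul_const u

end Rescaling

theorem squared_kernel_C1_general
    (d D : ℕ) (r : ℝ) (hr : 0 < r)
    (φ : EuclideanSpace ℝ (Fin d) → EuclideanSpace ℝ (Fin D))
    (hφ : ContDiff ℝ 1 φ)
    (c C : ℝ) (hc : 0 < c)
    (hbil : ∀ z ∈ closedBall (0 : EuclideanSpace ℝ (Fin d)) r,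
      ∀ z' ∈ closedBall (0 : EuclideanSpace ℝ (Fin d)) r,
        c * ‖z - z'‖ ≤ ‖φ z - φ z'‖ ∧ ‖φ z - φ z'‖ ≤ C * ‖z - z'‖)
    (f : EuclideanSpace ℝ (Fin d) → ℝ)
    (hf_meas : Measurable f)
    (hf_nonneg : ∀ z, 0 ≤ f z)
    (hf_supp : ∀ z ∉ closedBall (0 : EuclideanSpace ℝ (Fin d)) r, f z = 0)
    (hf_bdd : ∃ M : ℝ, ∀ z, f z ≤ M)
    (hf_cont : ContinuousAt f 0)
    (K : EuclideanSpace ℝ (Fin D) → ℝ)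
    (hK_cont : Continuous K)
    (hK_supp : HasCompactSupport K)
    (v : EuclideanSpace ℝ (Fin D) → ℝ)
    (hv_nonneg : ∀ y, 0 ≤ v y)
    (hv_bdd : ∃ M : ℝ, ∀ y, v y ≤ M)
    (hv_meas : Measurable v)
    (hv_cont : ContinuousAt v (φ 0)) :
    Tendsto
      (fun h : ℝ =>
        (∫ z in closedBall (0 : EuclideanSpace ℝ (Fin d)) r,
            K (h⁻¹ • (φ z - φ 0)) ^ 2 * v (φ z) * f z) / h ^ d)
      (nhdsWithin 0 (Set.Ioi 0))
      (nhds (f 0 * v (φ 0) * ∫ u, K (fderiv ℝ φ 0 u) ^ 2)) := by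
  have hW_bdd : ∃ M, ∀ z, ‖v (φ z) * f z‖ ≤ M := by
    obtain ⟨Mf, hMf⟩ := hf_bdd
    obtain ⟨Mv, hMv⟩ := hv_bdd
    refine ⟨Mv * Mf, fun z => ?_⟩
    rw [Real.norm_of_nonneg (mul_nonneg (hv_nonneg _) (hf_nonneg _))]
    exact mul_le_mul (hMv _) (hMf _) (hf_nonneg _) ((hv_nonneg (φ z)).trans (hMv _))
  have hφc : ∀ z ∈ closedBall (0 : EuclideanSpace ℝ (Fin d)) r, c * ‖z‖ ≤ ‖φ z - φ 0‖ :=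
    fun z hz => by simpa using (hbil z hz 0 (mem_closedBall_self hr.le)).1
  have hlim := tendsto_integral_rescaled volume (G := fun y => K y ^ 2)
    (W := fun z => v (φ z) * f z) hφ.continuous
    (hφ.differentiable one_ne_zero 0).hasFDerivAt hc hφc (hK_cont.pow 2)
    (hK_supp.comp_left (g := fun t : ℝ => t ^ 2) (zero_pow two_ne_zero))
    ((hv_meas.comp hφ.continuous.measurable).mul hf_meas) hW_bdd
    (fun z hz => by simp only [hf_supp z hz, mul_zero])
    ((hv_cont.comp hφ.continuous.continuousAt).mul hf_cont)
  rw [mul_comm (v (φ 0))] at hlim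
  refine hlim.congr' ?_
  filter_upwards [self_mem_nhdsWithin] with h (hh : 0 < h)
  rw [setIntegral_eq_integral_of_forall_compl_eq_zero fun z hz => by simp [hf_supp z hz],
    Measure.integral_comp_smul_of_nonneg volume
      (fun z => K (h⁻¹ • (φ z - φ 0)) ^ 2 * (v (φ z) * f z)) h (hR := hh.le),
    finrank_euclideanSpace_fin, smul_eq_mul, inv_mul_eq_div]
  simp only [mul_assoc]

/-- Squared-kernel asymptotic (constant C₁): as `h → 0⁺`,
`h^(-d) ∫_{B̄(0,r)} K((φ z − x)/h)² v(φ z) f z dz → f 0 · v x · ∫_{ℝ^d} K(L u)² du`. -/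
theorem squared_kernel_C1
    (d D : ℕ) (hd : 0 < d) (hdD : d ≤ D) (r : ℝ) (hr : 0 < r)
    (φ : EuclideanSpace ℝ (Fin d) → EuclideanSpace ℝ (Fin D))
    (hφ : ContDiff ℝ 1 φ)
    (c C : ℝ) (hc : 0 < c) (hcC : c ≤ C)
    (hbil : ∀ z ∈ closedBall (0 : EuclideanSpace ℝ (Fin d)) r,
      ∀ z' ∈ closedBall (0 : EuclideanSpace ℝ (Fin d)) r,
        c * ‖z - z'‖ ≤ ‖φ z - φ z'‖ ∧ ‖φ z - φ z'‖ ≤ C * ‖z - z'‖)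
    (hL : Function.Injective (fderiv ℝ φ 0))
    (f : EuclideanSpace ℝ (Fin d) → ℝ)
    (hf_meas : Measurable f)
    (hf_nonneg : ∀ z, 0 ≤ f z)
    (hf_supp : ∀ z ∉ closedBall (0 : EuclideanSpace ℝ (Fin d)) r, f z = 0)
    (hf_bdd : ∃ M : ℝ, ∀ z, f z ≤ M)
    (hf_prob : ∫ z, f z = 1)
    (hf_cont : ContinuousAt f 0) (hf_pos : 0 < f 0)
    (K : EuclideanSpace ℝ (Fin D) → ℝ)
    (hK_nonneg : ∀ u, 0 ≤ K u) (hK_cont : Continuous K)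
    (hK_supp : HasCompactSupport K)
    (v : EuclideanSpace ℝ (Fin D) → ℝ)
    (hv_nonneg : ∀ y, 0 ≤ v y)
    (hv_bdd : ∃ M : ℝ, ∀ y, v y ≤ M)
    (hv_meas : Measurable v)
    (hv_cont : ContinuousAt v (φ 0)) :
    Tendsto
      (fun h : ℝ =>
        (∫ z in closedBall (0 : EuclideanSpace ℝ (Fin d)) r,
            K (h⁻¹ • (φ z - φ 0)) ^ 2 * v (φ z) * f z) / h ^ d)
      (nhdsWithin 0 (Set.Ioi 0))
      (nhds (f 0 * v (φ 0) * ∫ u, K (fderiv ℝ φ 0 u) ^ 2)) :=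
  squared_kernel_C1_general d D r hr φ hφ c C hc hbil f hf_meas hf_nonneg hf_supp hf_bdd hf_cont K
    hK_cont hK_supp v hv_nonneg hv_bdd hv_meas hv_cont
end

section
/- Exponential tails imply the asymptotic irrelevance condition (ii): let μ be a probability measure on ℝ^D with finite second moment ∫ |y|² dμ(y) < ∞, let x ∈ ℝ^D, and fix constants c > 0, C_K > 0, M > 0, 0 < ε < 1 and γ ∈ {1, 2}. If K : ℝ^D → [0,∞) satisfies K(u) ≤ C_K e^{−c|u|} for all u, and w : ℝ^D → ℝ satisfies |w(y)| ≤ M(1 + |y|²) for all y, then for every natural number k, the function h ↦ ∫_{{y : |y−x| ≥ h^{1−ε}}} K((y−x)/h)^γ |w(y)| dμ(y) is o(h^k) as h → 0⁺. -/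
open MeasureTheory Filter

/-- Exponential tails imply the asymptotic irrelevance condition (ii): for a
probability measure `μ` on `ℝ^D` with finite second moment, a kernel with
exponential tails and a function `w` of quadratic growth,
`∫_{|y−x| ≥ h^{1−ε}} K((y−x)/h)^γ |w y| dμ(y) = o(h^k)` as `h → 0⁺`, for every `k`. -/
theorem exp_tails_imply_irrelevance
    (D : ℕ) (μ : Measure (EuclideanSpace ℝ (Fin D))) [IsProbabilityMeasure μ]
    (hμ2 : Integrable (fun y => ‖y‖ ^ 2) μ)
    (x : EuclideanSpace ℝ (Fin D))
    (c C_K M ε : ℝ) (hc : 0 < c) (hCK : 0 < C_K) (hM : 0 < M)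
    (hε0 : 0 < ε) (hε1 : ε < 1)
    (γ : ℕ) (hγ : γ = 1 ∨ γ = 2)
    (K : EuclideanSpace ℝ (Fin D) → ℝ)
    (hK_nonneg : ∀ u, 0 ≤ K u)
    (hK_tail : ∀ u, K u ≤ C_K * Real.exp (-c * ‖u‖))
    (hK_meas : Measurable K)
    (w : EuclideanSpace ℝ (Fin D) → ℝ)
    (hw_meas : Measurable w)
    (hw_growth : ∀ y, |w y| ≤ M * (1 + ‖y‖ ^ 2)) :
    ∀ k : ℕ,
      Tendsto
        (fun h : ℝ =>
          (∫ y in {y : EuclideanSpace ℝ (Fin D) | h ^ ((1 : ℝ) - ε) ≤ ‖y - x‖},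
              K (h⁻¹ • (y - x)) ^ γ * |w y| ∂μ) / h ^ k)
        (nhdsWithin 0 (Set.Ioi 0)) (nhds 0) := by
  intro k
  have hγ1 : 1 ≤ γ := by rcases hγ with h | h <;> omega
  -- integrable dominating function
  have hI : Integrable (fun y : EuclideanSpace ℝ (Fin D) => 1 + ‖y‖ ^ 2) μ :=
    (integrable_const 1).add hμ2
  set I : ℝ := ∫ y, (1 + ‖y‖ ^ 2) ∂μ with hIdef
  have hInn : 0 ≤ I := integral_nonneg fun y => by positivity
  -- the upper bounding function
  set B : ℝ := C_K ^ γ * M * I with hBdef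
  have hBnn : 0 ≤ B := by positivity
  have key : ∀ h : ℝ, 0 < h →
      (∫ y in {y : EuclideanSpace ℝ (Fin D) | h ^ ((1 : ℝ) - ε) ≤ ‖y - x‖},
          K (h⁻¹ • (y - x)) ^ γ * |w y| ∂μ)
        ≤ B * Real.exp (-c * h ^ (-ε)) := by
    intro h hh
    set S : Set (EuclideanSpace ℝ (Fin D)) := {y | h ^ ((1 : ℝ) - ε) ≤ ‖y - x‖} with hSdef
    have hSm : MeasurableSet S := by
      apply measurableSet_le measurable_const
      exact (continuous_norm.comp (continuous_id.sub continuous_const)).measurable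
    -- pointwise bound on S
    have hpt : ∀ y ∈ S, K (h⁻¹ • (y - x)) ^ γ * |w y|
        ≤ (C_K ^ γ * Real.exp (-c * h ^ (-ε))) * (M * (1 + ‖y‖ ^ 2)) := by
      intro y hy
      have hnorm : h ^ (-ε) ≤ ‖h⁻¹ • (y - x)‖ := by
        rw [norm_smul, norm_inv, Real.norm_eq_abs, abs_of_pos hh]
        have : h ^ (-ε) = h ^ ((1 : ℝ) - ε) * h⁻¹ := by
          rw [← Real.rpow_neg_one h, ← Real.rpow_add hh]; ring_nf
        rw [this, mul_comm]
        exact mul_le_mul_of_nonneg_left hy (inv_nonneg.mpr hh.le)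
      have hKb : K (h⁻¹ • (y - x)) ^ γ ≤ C_K ^ γ * Real.exp (-c * h ^ (-ε)) := by
        have h1 : K (h⁻¹ • (y - x)) ^ γ ≤ (C_K * Real.exp (-c * ‖h⁻¹ • (y - x)‖)) ^ γ :=
          pow_le_pow_left₀ (hK_nonneg _) (hK_tail _) γ
        have h2 : (C_K * Real.exp (-c * ‖h⁻¹ • (y - x)‖)) ^ γ
            = C_K ^ γ * Real.exp (-c * ‖h⁻¹ • (y - x)‖) ^ γ := by ring
        have h3 : Real.exp (-c * ‖h⁻¹ • (y - x)‖) ^ γ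
            ≤ Real.exp (-c * ‖h⁻¹ • (y - x)‖) := by
          apply pow_le_of_le_one (Real.exp_nonneg _) _ (by omega : γ ≠ 0)
          rw [Real.exp_le_one_iff]
          have : 0 ≤ c * ‖h⁻¹ • (y - x)‖ := by positivity
          linarith
        have h4 : Real.exp (-c * ‖h⁻¹ • (y - x)‖) ≤ Real.exp (-c * h ^ (-ε)) := by
          apply Real.exp_le_exp.mpr
          nlinarith
        calc K (h⁻¹ • (y - x)) ^ γ ≤ C_K ^ γ * Real.exp (-c * ‖h⁻¹ • (y - x)‖) ^ γ := by
              rw [← h2]; exact h1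
          _ ≤ C_K ^ γ * Real.exp (-c * h ^ (-ε)) := by
              apply mul_le_mul_of_nonneg_left _ (by positivity)
              exact h3.trans h4
      calc K (h⁻¹ • (y - x)) ^ γ * |w y|
          ≤ (C_K ^ γ * Real.exp (-c * h ^ (-ε))) * |w y| := by
            exact mul_le_mul_of_nonneg_right hKb (abs_nonneg _)
        _ ≤ (C_K ^ γ * Real.exp (-c * h ^ (-ε))) * (M * (1 + ‖y‖ ^ 2)) := by
            exact mul_le_mul_of_nonneg_left (hw_growth y) (by positivity)
    -- integrability
    have hbound_int : Integrable
        (fun y : EuclideanSpace ℝ (Fin D) =>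
          (C_K ^ γ * Real.exp (-c * h ^ (-ε))) * (M * (1 + ‖y‖ ^ 2))) μ :=
      (hI.const_mul M).const_mul _
    have hf_meas : Measurable (fun y : EuclideanSpace ℝ (Fin D) =>
        K (h⁻¹ • (y - x)) ^ γ * |w y|) := by
      apply Measurable.mul
      · exact (hK_meas.comp ((measurable_id.sub_const x).const_smul h⁻¹)).pow_const γ
      · exact hw_meas.abs
    have hf_int : Integrable (fun y : EuclideanSpace ℝ (Fin D) =>
        K (h⁻¹ • (y - x)) ^ γ * |w y|) μ := by
      apply ((hI.const_mul (C_K ^ γ * M)).mono hf_meas.aestronglyMeasurable)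
      filter_upwards with y
      rw [Real.norm_eq_abs, abs_of_nonneg (mul_nonneg (pow_nonneg (hK_nonneg _) _) (abs_nonneg _)),
        Real.norm_eq_abs]
      have hK1 : K (h⁻¹ • (y - x)) ^ γ ≤ C_K ^ γ := by
        apply pow_le_pow_left₀ (hK_nonneg _)
        calc K (h⁻¹ • (y - x)) ≤ C_K * Real.exp (-c * ‖h⁻¹ • (y - x)‖) := hK_tail _
          _ ≤ C_K * 1 := by
              apply mul_le_mul_of_nonneg_left _ hCK.le
              rw [Real.exp_le_one_iff]
              have : 0 ≤ c * ‖h⁻¹ • (y - x)‖ := by positivity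
              linarith
          _ = C_K := mul_one _
      have h1nn : (0:ℝ) ≤ 1 + ‖y‖ ^ 2 := by positivity
      calc K (h⁻¹ • (y - x)) ^ γ * |w y| ≤ C_K ^ γ * (M * (1 + ‖y‖ ^ 2)) := by
            apply mul_le_mul hK1 (hw_growth y) (abs_nonneg _) (by positivity)
        _ ≤ |C_K ^ γ * M * (1 + ‖y‖ ^ 2)| := le_abs_self _ |>.trans_eq (by ring_nf)
    calc (∫ y in S, K (h⁻¹ • (y - x)) ^ γ * |w y| ∂μ)
        ≤ ∫ y in S, (C_K ^ γ * Real.exp (-c * h ^ (-ε))) * (M * (1 + ‖y‖ ^ 2)) ∂μ :=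
          setIntegral_mono_on hf_int.integrableOn hbound_int.integrableOn hSm hpt
      _ ≤ ∫ y, (C_K ^ γ * Real.exp (-c * h ^ (-ε))) * (M * (1 + ‖y‖ ^ 2)) ∂μ := by
          apply setIntegral_le_integral hbound_int
          filter_upwards with y
          positivity
      _ = B * Real.exp (-c * h ^ (-ε)) := by
          rw [integral_const_mul, integral_const_mul, hBdef, hIdef]
          ring
  -- squeeze
  have hup : Tendsto (fun h : ℝ => B * (Real.exp (-c * h ^ (-ε)) / h ^ k))
      (nhdsWithin 0 (Set.Ioi 0)) (nhds 0) := by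
    have hT : Tendsto (fun h : ℝ => Real.exp (-c * h ^ (-ε)) / h ^ k)
        (nhdsWithin 0 (Set.Ioi 0)) (nhds 0) := ?_
    · simpa using hT.const_mul B
    have hcomp : Tendsto (fun h : ℝ => h ^ (-ε)) (nhdsWithin 0 (Set.Ioi 0)) atTop := by
      have h1 : Tendsto (fun h : ℝ => (h⁻¹) ^ ε) (nhdsWithin 0 (Set.Ioi 0)) atTop :=
        (tendsto_rpow_atTop hε0).comp tendsto_inv_nhdsGT_zero
      apply h1.congr'
      filter_upwards [self_mem_nhdsWithin] with h (hh : 0 < h)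
      show (h⁻¹) ^ ε = h ^ (-ε)
      rw [Real.inv_rpow hh.le, ← Real.rpow_neg hh.le]
    have h2 : Tendsto (fun t : ℝ => t ^ ((k : ℝ) / ε) * Real.exp (-c * t)) atTop (nhds 0) :=
      tendsto_rpow_mul_exp_neg_mul_atTop_nhds_zero _ c hc
    have h3 := h2.comp hcomp
    apply h3.congr'
    filter_upwards [self_mem_nhdsWithin] with h (hh : 0 < h)
    have hhε : (0:ℝ) < h ^ (-ε) := Real.rpow_pos_of_pos hh _
    simp only [Function.comp_apply]
    rw [← Real.rpow_natCast h k, ← Real.rpow_mul hh.le]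
    have : -ε * ((k : ℝ) / ε) = -(k : ℝ) := by field_simp
    rw [this, Real.rpow_neg hh.le, div_eq_mul_inv, mul_comm]
  have hlow : Tendsto (fun _ : ℝ => (0:ℝ)) (nhdsWithin 0 (Set.Ioi 0)) (nhds 0) :=
    tendsto_const_nhds
  apply tendsto_of_tendsto_of_tendsto_of_le_of_le' hlow hup
  · filter_upwards [self_mem_nhdsWithin] with h (hh : 0 < h)
    apply div_nonneg _ (pow_nonneg hh.le k)
    apply integral_nonneg
    intro y
    exact mul_nonneg (pow_nonneg (hK_nonneg _) _) (abs_nonneg _)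
  · filter_upwards [self_mem_nhdsWithin] with h (hh : 0 < h)
    rw [div_le_iff₀ (by positivity), mul_assoc, div_mul_cancel₀ _ (by positivity : (h:ℝ)^k ≠ 0)]
    exact key h hh
end

section
/- Law of large numbers for the kernel sum (upper-left Gram entry): (n h_n^d)^{-1} Σ_{i=1}^n K((X_i − x)/h_n) converges in probability to f(0) · ∫_{ℝ^d} K(L u) du as n → ∞. -/
/-!
The normalised sum `S_n = (n h^d)⁻¹ Σ K((X_i − x)/h)` has mean `E K((X − x)/h) / h^d`.
Pulling this back along `φ` and substituting `z = h u` gives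
`∫ f(h u) K((φ(h u) − φ 0)/h) du`, which tends to `f 0 ∫ K(L u) du` by dominated convergence:
the lower Lipschitz bound `c ‖h u‖ ≤ ‖φ(h u) − φ 0‖ ≤ h R` keeps the integrand supported in the
fixed ball of radius `R / c`. Since `0 ≤ K ≤ ‖K‖∞`, each summand has variance at most `‖K‖∞`
times its mean, so `Var S_n = O(1 / (n h^d)) → 0` by pairwise independence, and Chebyshev's
inequality concludes.
-/

open MeasureTheory Metric Filter Topology

section WeakLaw

open ProbabilityTheory

variable {Ω : Type*} [MeasurableSpace Ω] {μ : Measure Ω}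

theorem tendstoInMeasure_const_of_tendsto_integral_of_tendsto_variance [IsFiniteMeasure μ]
    {ι : Type*} {l : Filter ι} {g : ι → Ω → ℝ} (hg : ∀ i, MemLp (g i) 2 μ) {a : ℝ}
    (hmean : Tendsto (fun i => ∫ ω, g i ω ∂μ) l (𝓝 a))
    (hvar : Tendsto (fun i => variance (g i) μ) l (𝓝 0)) :
    TendstoInMeasure μ g l fun _ => a := by
  refine tendstoInMeasure_iff_dist.mpr fun ε hε => ?_
  have hε2 : 0 < ε / 2 := half_pos hε
  have hbound : Tendsto (fun i => ENNReal.ofReal (variance (g i) μ / (ε / 2) ^ 2)) l (𝓝 0) := by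
    simpa using ENNReal.tendsto_ofReal (hvar.div_const ((ε / 2) ^ 2))
  refine tendsto_of_tendsto_of_tendsto_of_le_of_le' tendsto_const_nhds hbound
    (Eventually.of_forall fun _ => zero_le) ?_
  filter_upwards [hmean (ball_mem_nhds a hε2)] with i hi
  refine (measure_mono fun ω hω => ?_).trans (meas_ge_le_variance_div_sq (hg i) hε2)
  have hmean_near : dist (∫ ω, g i ω ∂μ) a < ε / 2 := hi
  have hfar : ε ≤ dist (g i ω) a := hω
  rw [Set.mem_ofPred_eq, ← Real.dist_eq]
  linarith [dist_triangle (g i ω) (∫ ω, g i ω ∂μ) a]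

lemma variance_le_mul_integral [IsProbabilityMeasure μ] {Z : Ω → ℝ}
    (hZ : AEStronglyMeasurable Z μ) {b : ℝ} (hZ0 : ∀ ω, 0 ≤ Z ω) (hZb : ∀ ω, Z ω ≤ b) :
    variance Z μ ≤ b * ∫ ω, Z ω ∂μ := by
  have hZ_int : Integrable Z μ :=
    .of_bound hZ b (ae_of_all _ fun ω => by rw [Real.norm_of_nonneg (hZ0 ω)]; exact hZb ω)
  calc variance Z μ ≤ ∫ ω, Z ω ^ 2 ∂μ := variance_le_expectation_sq hZ
    _ ≤ ∫ ω, b * Z ω ∂μ := by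
      refine integral_mono_of_nonneg (ae_of_all _ fun ω => sq_nonneg _) (hZ_int.const_mul b)
        (ae_of_all _ fun ω => ?_)
      show Z ω ^ 2 ≤ b * Z ω
      rw [sq]
      exact mul_le_mul_of_nonneg_right (hZb ω) (hZ0 ω)
    _ = b * ∫ ω, Z ω ∂μ := integral_const_mul b _

variable [IsProbabilityMeasure μ] {E : Type*} [MeasurableSpace E] {X : ℕ → Ω → E}
  {P : Measure E}

theorem tendstoInMeasure_sum_div_of_pairwise_indepFun (hX_meas : ∀ i, Measurable (X i))
    (hX_indep : Pairwise fun i j => IndepFun (X i) (X j) μ) (hX_law : ∀ i, μ.map (X i) = P)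
    {g : ℕ → E → ℝ} (hg : ∀ n, Measurable (g n)) {b : ℝ} (hg0 : ∀ n y, 0 ≤ g n y)
    (hgb : ∀ n y, g n y ≤ b) {N : ℕ → ℝ} (hN : Tendsto N atTop atTop) {a : ℝ}
    (hmean : Tendsto (fun n => n * (∫ y, g n y ∂P) / N n) atTop (𝓝 a)) :
    TendstoInMeasure μ (fun n ω => (∑ i ∈ Finset.range n, g n (X i ω)) / N n) atTop
      fun _ => a := by
  set Y : ℕ → ℕ → Ω → ℝ := fun n i ω => g n (X i ω)
  have hY_meas n i : Measurable (Y n i) := (hg n).comp (hX_meas i)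
  have hY_memLp n i : MemLp (Y n i) 2 μ :=
    .of_bound (hY_meas n i).aestronglyMeasurable b
      (ae_of_all _ fun ω => by rw [Real.norm_of_nonneg (hg0 n _)]; exact hgb n _)
  have hY_mean n i : ∫ ω, Y n i ω ∂μ = ∫ y, g n y ∂P := by
    rw [← hX_law i, integral_map (hX_meas i).aemeasurable (hg n).aestronglyMeasurable]
  have hS_mean n : ∫ ω, ∑ i ∈ Finset.range n, Y n i ω ∂μ = n * ∫ y, g n y ∂P := by
    rw [integral_finsetSum _ fun i _ => (hY_memLp n i).integrable one_le_two]
    simp [hY_mean]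
  have hS_var n : variance (fun ω => ∑ i ∈ Finset.range n, Y n i ω) μ
      ≤ n * (b * ∫ y, g n y ∂P) := by
    rw [← Finset.sum_fn, IndepFun.variance_sum (fun i _ => hY_memLp n i)
      fun i _ j _ hij => (hX_indep hij).comp (hg n) (hg n)]
    calc ∑ i ∈ Finset.range n, variance (Y n i) μ
        ≤ ∑ i ∈ Finset.range n, b * ∫ y, g n y ∂P := Finset.sum_le_sum fun i _ => by
          rw [← hY_mean n i]
          exact variance_le_mul_integral (hY_meas n i).aestronglyMeasurable
            (fun ω => hg0 n _) fun ω => hgb n _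
      _ = n * (b * ∫ y, g n y ∂P) := by simp
  refine tendstoInMeasure_const_of_tendsto_integral_of_tendsto_variance
    (fun n => ?_) ?_ ?_
  · simp_rw [div_eq_inv_mul]
    exact (memLp_finsetSum _ fun i _ => hY_memLp n i).const_mul _
  · refine hmean.congr fun n => ?_
    rw [integral_div]
    exact congrArg (· / N n) (hS_mean n).symm
  · have hvar_le n : variance (fun ω => (∑ i ∈ Finset.range n, Y n i ω) / N n) μ
        ≤ b * (n * (∫ y, g n y ∂P) / N n) / N n := by
      simp_rw [div_eq_inv_mul, variance_const_mul]
      calc (N n)⁻¹ ^ 2 * variance (fun ω => ∑ i ∈ Finset.range n, Y n i ω) μ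
          ≤ (N n)⁻¹ ^ 2 * (n * (b * ∫ y, g n y ∂P)) :=
            mul_le_mul_of_nonneg_left (hS_var n) (sq_nonneg _)
        _ = _ := by ring
    have hlim : Tendsto (fun n => b * (n * (∫ y, g n y ∂P) / N n) / N n) atTop (𝓝 0) := by
      simpa using (hmean.const_mul b).div_atTop hN
    exact tendsto_of_tendsto_of_tendsto_of_le_of_le tendsto_const_nhds hlim
      (fun n => variance_nonneg _ _) hvar_le

end WeakLaw

lemma integral_map_withDensity_ofReal {α β : Type*} [MeasurableSpace α] [MeasurableSpace β]
    {μ : Measure α} {φ : α → β} (hφ : Measurable φ) {f : α → ℝ} (hf : Measurable f)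
    (hf_nonneg : ∀ z, 0 ≤ f z) {s : Set α} (hfs : ∀ z ∉ s, f z = 0)
    {G : β → ℝ} (hG : Measurable G) :
    ∫ y, G y ∂((μ.restrict s).withDensity fun z => ENNReal.ofReal (f z)).map φ
      = ∫ z, f z * G (φ z) ∂μ := by
  rw [integral_map hφ.aemeasurable hG.aestronglyMeasurable,
    integral_withDensity_eq_integral_toReal_smul hf.ennreal_ofReal
      (ae_of_all _ fun _ => ENNReal.ofReal_lt_top),
    setIntegral_eq_integral_of_forall_compl_eq_zero fun z hz => by simp [hfs z hz]]
  simp [ENNReal.toReal_ofReal (hf_nonneg _)]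

lemma tendsto_inv_smul_sub_of_hasFDerivAt {E F : Type*} [NormedAddCommGroup E] [NormedSpace ℝ E]
    [NormedAddCommGroup F] [NormedSpace ℝ F] {φ : E → F} {L : E →L[ℝ] F} (hφ : HasFDerivAt φ L 0)
    (u : E) {h : ℕ → ℝ} (hh_pos : ∀ n, 0 < h n) (hh0 : Tendsto h atTop (𝓝 0)) :
    Tendsto (fun n => (h n)⁻¹ • (φ (h n • u) - φ 0)) atTop (𝓝 (L u)) := by
  have hh : Tendsto h atTop (𝓝[≠] 0) :=
    tendsto_nhdsWithin_of_tendsto_nhds_of_eventually_within _ hh0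
      (Eventually.of_forall fun n => (hh_pos n).ne')
  simpa [Function.comp_def] using (hφ.hasLineDerivAt u).tendsto_slope_zero.comp hh

section RescaledKernel

variable {E F : Type*} [NormedAddCommGroup E] [NormedSpace ℝ E] [NormedAddCommGroup F]
  [NormedSpace ℝ F] {φ : E → F} {f : E → ℝ} {K : F → ℝ} {c r M : ℝ}

lemma norm_rescaled_integrand_le (hc : 0 < c)
    (hφ_lower : ∀ z ∈ closedBall (0 : E) r, c * ‖z‖ ≤ ‖φ z - φ 0‖) (hfM : ∀ z, ‖f z‖ ≤ M)
    (hf_supp : ∀ z ∉ closedBall (0 : E) r, f z = 0) {Kb R : ℝ} (hKb : ∀ y, ‖K y‖ ≤ Kb)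
    (hKR : tsupport K ⊆ closedBall 0 R) {t : ℝ} (ht : 0 < t) (u : E) :
    ‖f (t • u) * K (t⁻¹ • (φ (t • u) - φ 0))‖
      ≤ (closedBall (0 : E) (R / c)).indicator (fun _ => M * Kb) u := by
  by_cases hu : u ∈ closedBall (0 : E) (R / c)
  · rw [Set.indicator_of_mem hu, norm_mul]
    exact mul_le_mul (hfM _) (hKb _) (norm_nonneg _) ((norm_nonneg _).trans (hfM 0))
  rw [Set.indicator_of_notMem hu, norm_le_zero_iff, mul_eq_zero, or_iff_not_imp_left]
  intro hf_ne
  have htu : t • u ∈ closedBall (0 : E) r := by_contra fun h => hf_ne (hf_supp _ h)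
  refine image_eq_zero_of_notMem_tsupport fun hmem => hu ?_
  have hK_near : ‖t⁻¹ • (φ (t • u) - φ 0)‖ ≤ R := mem_closedBall_zero_iff.mp (hKR hmem)
  have hlow := hφ_lower _ htu
  rw [norm_smul, Real.norm_of_nonneg ht.le] at hlow
  rw [norm_smul, Real.norm_of_nonneg (inv_nonneg.2 ht.le), inv_mul_le_iff₀ ht] at hK_near
  rw [mem_closedBall_zero_iff, le_div_iff₀ hc]
  nlinarith

theorem tendsto_integral_rescaled_kernel [MeasurableSpace E] [BorelSpace E] [ProperSpace E]
    {μ : Measure E} [IsFiniteMeasureOnCompacts μ] (hφ : Continuous φ) {L : E →L[ℝ] F}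
    (hφL : HasFDerivAt φ L 0) (hc : 0 < c)
    (hφ_lower : ∀ z ∈ closedBall (0 : E) r, c * ‖z‖ ≤ ‖φ z - φ 0‖) (hf : Measurable f)
    (hfM : ∀ z, ‖f z‖ ≤ M) (hf_supp : ∀ z ∉ closedBall (0 : E) r, f z = 0)
    (hf0 : ContinuousAt f 0) (hK : Continuous K) (hK_supp : HasCompactSupport K) {h : ℕ → ℝ}
    (hh_pos : ∀ n, 0 < h n) (hh0 : Tendsto h atTop (𝓝 0)) :
    Tendsto (fun n => ∫ u, f (h n • u) * K ((h n)⁻¹ • (φ (h n • u) - φ 0)) ∂μ) atTop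
      (𝓝 (f 0 * ∫ u, K (L u) ∂μ)) := by
  obtain ⟨Kb, hKb⟩ := hK_supp.exists_bound_of_continuous hK
  obtain ⟨R, -, hKR⟩ := hK_supp.isBounded.subset_closedBall_lt 0 0
  rw [← integral_const_mul]
  refine tendsto_integral_of_dominated_convergence _ (fun n => ?_)
    ((integrable_indicator_iff measurableSet_closedBall).2
      (integrableOn_const measure_closedBall_lt_top.ne))
    (fun n => ae_of_all _ (norm_rescaled_integrand_le hc hφ_lower hfM hf_supp hKb hKR (hh_pos n)))
    (ae_of_all _ fun u => ?_)
  · have hK_n : Continuous fun u => K ((h n)⁻¹ • (φ (h n • u) - φ 0)) := by fun_prop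
    exact ((hf.comp (continuous_const_smul (h n)).measurable).mul
      hK_n.measurable).aestronglyMeasurable
  · have hhu : Tendsto (fun n => h n • u) atTop (𝓝 0) := by simpa using hh0.smul_const u
    exact (hf0.tendsto.comp hhu).mul
      ((hK.tendsto _).comp (tendsto_inv_smul_sub_of_hasFDerivAt hφL u hh_pos hh0))

theorem tendsto_integral_kernel_map_withDensity_div_pow [FiniteDimensional ℝ E]
    [MeasurableSpace E] [BorelSpace E] {μ : Measure E} [μ.IsAddHaarMeasure] [MeasurableSpace F]
    [BorelSpace F] (hφ : Continuous φ) {L : E →L[ℝ] F} (hφL : HasFDerivAt φ L 0) (hc : 0 < c)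
    (hφ_lower : ∀ z ∈ closedBall (0 : E) r, c * ‖z‖ ≤ ‖φ z - φ 0‖) (hf : Measurable f)
    (hf_nonneg : ∀ z, 0 ≤ f z) (hfM : ∀ z, ‖f z‖ ≤ M)
    (hf_supp : ∀ z ∉ closedBall (0 : E) r, f z = 0) (hf0 : ContinuousAt f 0)
    (hK : Continuous K) (hK_supp : HasCompactSupport K) {h : ℕ → ℝ} (hh_pos : ∀ n, 0 < h n)
    (hh0 : Tendsto h atTop (𝓝 0)) :
    Tendsto (fun n => (∫ y, K ((h n)⁻¹ • (y - φ 0))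
        ∂((μ.restrict (closedBall 0 r)).withDensity fun z => ENNReal.ofReal (f z)).map φ)
        / h n ^ Module.finrank ℝ E) atTop (𝓝 (f 0 * ∫ u, K (L u) ∂μ)) := by
  refine (tendsto_integral_rescaled_kernel hφ hφL hc hφ_lower hf hfM hf_supp hf0 hK hK_supp
    hh_pos hh0).congr fun n => ?_
  have hK_n : Continuous fun y => K ((h n)⁻¹ • (y - φ 0)) := by fun_prop
  rw [integral_map_withDensity_ofReal hφ.measurable hf hf_nonneg hf_supp hK_n.measurable,
    div_eq_inv_mul, ← smul_eq_mul]
  exact Measure.integral_comp_smul_of_nonneg μ (fun z => f z * K ((h n)⁻¹ • (φ z - φ 0))) (h n)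
    (hR := (hh_pos n).le)

end RescaledKernel

theorem lln_kernel_sum_general
    (d D : ℕ) (r : ℝ) (hr : 0 < r)
    (φ : EuclideanSpace ℝ (Fin d) → EuclideanSpace ℝ (Fin D))
    (hφ : ContDiff ℝ 1 φ)
    (c C : ℝ) (hc : 0 < c)
    (hbil : ∀ z ∈ closedBall (0 : EuclideanSpace ℝ (Fin d)) r,
      ∀ z' ∈ closedBall (0 : EuclideanSpace ℝ (Fin d)) r,
        c * ‖z - z'‖ ≤ ‖φ z - φ z'‖ ∧ ‖φ z - φ z'‖ ≤ C * ‖z - z'‖)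
    (f : EuclideanSpace ℝ (Fin d) → ℝ)
    (hf_meas : Measurable f)
    (hf_nonneg : ∀ z, 0 ≤ f z)
    (hf_supp : ∀ z ∉ closedBall (0 : EuclideanSpace ℝ (Fin d)) r, f z = 0)
    (hf_bdd : ∃ M : ℝ, ∀ z, f z ≤ M)
    (hf_cont : ContinuousAt f 0)
    (K : EuclideanSpace ℝ (Fin D) → ℝ)
    (hK_nonneg : ∀ u, 0 ≤ K u) (hK_cont : Continuous K)
    (hK_supp : HasCompactSupport K)
    (Ω : Type*) [MeasurableSpace Ω] (ℙ : Measure Ω) [IsProbabilityMeasure ℙ]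
    (X : ℕ → Ω → EuclideanSpace ℝ (Fin D))
    (hX_meas : ∀ i, Measurable (X i))
    (hX_indep : ProbabilityTheory.iIndepFun X ℙ)
    (hX_law : ∀ i, Measure.map (X i) ℙ =
      Measure.map φ
        ((volume.restrict (closedBall (0 : EuclideanSpace ℝ (Fin d)) r)).withDensity
          fun z => ENNReal.ofReal (f z)))
    (h : ℕ → ℝ) (hh_pos : ∀ n, 0 < h n)
    (hh0 : Tendsto h atTop (nhds 0))
    (hnh : Tendsto (fun n : ℕ => (n : ℝ) * h n ^ d) atTop atTop) :
    TendstoInMeasure ℙ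
      (fun (n : ℕ) ω =>
        (∑ i ∈ Finset.range n, K ((h n)⁻¹ • (X i ω - φ 0))) / ((n : ℝ) * h n ^ d))
      atTop (fun _ => f 0 * ∫ u, K (fderiv ℝ φ 0 u)) := by
  obtain ⟨M, hM⟩ := hf_bdd
  obtain ⟨Kb, hKb⟩ := hK_supp.exists_bound_of_continuous hK_cont
  have hφ_lower z (hz : z ∈ closedBall 0 r) : c * ‖z‖ ≤ ‖φ z - φ 0‖ := by
    simpa using (hbil z hz 0 (mem_closedBall_self hr.le)).1
  have hbias := tendsto_integral_kernel_map_withDensity_div_pow (μ := volume) hφ.continuous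
    (hφ.differentiable one_ne_zero 0).hasFDerivAt hc hφ_lower hf_meas hf_nonneg
    (fun z => (Real.norm_of_nonneg (hf_nonneg z)).trans_le (hM z)) hf_supp hf_cont hK_cont
    hK_supp hh_pos hh0
  rw [finrank_euclideanSpace_fin] at hbias
  have hK_meas n : Measurable fun y => K ((h n)⁻¹ • (y - φ 0)) := by fun_prop
  refine tendstoInMeasure_sum_div_of_pairwise_indepFun hX_meas
    (fun i j hij => hX_indep.indepFun hij) hX_law hK_meas (fun n y => hK_nonneg _)
    (fun n y => (le_abs_self _).trans (hKb _)) hnh ?_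
  refine hbias.congr' ((eventually_ne_atTop 0).mono fun n hn => ?_)
  field_simp

/-- LLN for the kernel sum (upper-left Gram entry):
`(n h_n^d)⁻¹ Σ_{i<n} K((X_i − x)/h_n) → f 0 · ∫ K (L u) du` in probability. -/
theorem lln_kernel_sum
    (d D : ℕ) (hd : 0 < d) (hdD : d ≤ D) (r : ℝ) (hr : 0 < r)
    (φ : EuclideanSpace ℝ (Fin d) → EuclideanSpace ℝ (Fin D))
    (hφ : ContDiff ℝ 1 φ)
    (c C : ℝ) (hc : 0 < c) (hcC : c ≤ C)
    (hbil : ∀ z ∈ closedBall (0 : EuclideanSpace ℝ (Fin d)) r,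
      ∀ z' ∈ closedBall (0 : EuclideanSpace ℝ (Fin d)) r,
        c * ‖z - z'‖ ≤ ‖φ z - φ z'‖ ∧ ‖φ z - φ z'‖ ≤ C * ‖z - z'‖)
    (hL : Function.Injective (fderiv ℝ φ 0))
    (f : EuclideanSpace ℝ (Fin d) → ℝ)
    (hf_meas : Measurable f)
    (hf_nonneg : ∀ z, 0 ≤ f z)
    (hf_supp : ∀ z ∉ closedBall (0 : EuclideanSpace ℝ (Fin d)) r, f z = 0)
    (hf_bdd : ∃ M : ℝ, ∀ z, f z ≤ M)
    (hf_prob : ∫ z, f z = 1)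
    (hf_cont : ContinuousAt f 0) (hf_pos : 0 < f 0)
    (K : EuclideanSpace ℝ (Fin D) → ℝ)
    (hK_nonneg : ∀ u, 0 ≤ K u) (hK_cont : Continuous K)
    (hK_supp : HasCompactSupport K)
    (Ω : Type*) [MeasurableSpace Ω] (ℙ : Measure Ω) [IsProbabilityMeasure ℙ]
    (X : ℕ → Ω → EuclideanSpace ℝ (Fin D))
    (hX_meas : ∀ i, Measurable (X i))
    (hX_indep : ProbabilityTheory.iIndepFun X ℙ)
    (hX_law : ∀ i, Measure.map (X i) ℙ =
      Measure.map φ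
        ((volume.restrict (closedBall (0 : EuclideanSpace ℝ (Fin d)) r)).withDensity
          fun z => ENNReal.ofReal (f z)))
    (h : ℕ → ℝ) (hh_pos : ∀ n, 0 < h n)
    (hh0 : Tendsto h atTop (nhds 0))
    (hnh : Tendsto (fun n : ℕ => (n : ℝ) * h n ^ d) atTop atTop) :
    TendstoInMeasure ℙ
      (fun (n : ℕ) ω =>
        (∑ i ∈ Finset.range n, K ((h n)⁻¹ • (X i ω - φ 0))) / ((n : ℝ) * h n ^ d))
      atTop (fun _ => f 0 * ∫ u, K (fderiv ℝ φ 0 u)) :=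
  lln_kernel_sum_general d D r hr φ hφ c C hc hbil f hf_meas hf_nonneg hf_supp hf_bdd hf_cont K
    hK_nonneg hK_cont hK_supp Ω ℙ X hX_meas hX_indep hX_law h hh_pos hh0 hnh
end
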